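/- Let ν and μ be probability measures on a measurable space and let Q be a measurable real-valued function with finite second moments under both ν and μ. Then for every t ∈ ℝ, |E_ν[(Q − t)^+] − E_μ[(Q − t)^+]| ≤ 2 (E_ν[Q²] + E_μ[Q²])^{1/2} · tv(ν, μ)^{1/2}, where (x)^+ = max(x, 0). In particular, the bound is uniform in t. -/

import Mathlib

open MeasureTheory

/-! Let `d` be the density of `ν - μ` with respect to `ν + μ`. Then
`∫ f ∂ν - ∫ f ∂μ = ∫ d f ∂(ν + μ)`, and since `|d| ≤ 1`, `∫ d² ≤ ∫ |d| ≤ 2 tv(ν, μ)`; Cauchy–Schwarz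
in `L²(ν + μ)` bounds the difference by `√2 ‖f‖₂ √tv(ν, μ)`. For `t ≥ 0` the ramp `(Q - t)⁺` is
dominated by `|Q|`; for `t < 0` the shifted ramp `(Q - t)⁺ + t = max Q t` is, and the shift by a
constant does not change the difference of expectations. -/

/-- Total variation distance between two measures:
`tv(μ, ν) = sup_{A measurable} |μ(A) − ν(A)|`. -/
noncomputable def tvDist {α : Type*} [MeasurableSpace α] (μ ν : Measure α) : ℝ :=
  ⨆ s : {s : Set α // MeasurableSet s}, |(μ s.1).toReal - (ν s.1).toReal|

lemma abs_integral_mul_le_sqrt_mul_sqrt {α : Type*} [MeasurableSpace α] {μ : Measure α}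
    {f g : α → ℝ} (hf : MemLp f 2 μ) (hg : MemLp g 2 μ) :
    |∫ x, f x * g x ∂μ| ≤ √(∫ x, f x ^ 2 ∂μ) * √(∫ x, g x ^ 2 ∂μ) := by
  have hnorm_rpow : ∀ y : ℝ, ‖y‖ ^ (2 : ℝ) = y ^ 2 := fun y => by
    rw [Real.rpow_two, Real.norm_eq_abs, sq_abs]
  have holder := integral_mul_norm_le_Lp_mul_Lq Real.HolderConjugate.two_two
    (by simpa using hf) (by simpa using hg)
  simp only [hnorm_rpow, ← Real.sqrt_eq_rpow] at holder
  calc |∫ x, f x * g x ∂μ| ≤ ∫ x, ‖f x‖ * ‖g x‖ ∂μ := by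
        simpa only [Real.norm_eq_abs, norm_mul] using
          norm_integral_le_integral_norm (fun x => f x * g x)
    _ ≤ _ := holder

lemma abs_measureReal_sub_le_tvDist {α : Type*} [MeasurableSpace α] (ν μ : Measure α)
    [IsFiniteMeasure ν] [IsFiniteMeasure μ] {s : Set α} (hs : MeasurableSet s) :
    |ν.real s - μ.real s| ≤ tvDist ν μ := by
  refine le_ciSup (f := fun s : {s : Set α // MeasurableSet s} => |ν.real s.1 - μ.real s.1|)
    ⟨ν.real Set.univ + μ.real Set.univ, ?_⟩ ⟨s, hs⟩
  rintro _ ⟨s, rfl⟩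
  refine (abs_sub _ _).trans (add_le_add ?_ ?_) <;>
    simpa only [abs_of_nonneg measureReal_nonneg] using measureReal_mono (Set.subset_univ _)

section DensityDiff

variable {α : Type*} [MeasurableSpace α]

noncomputable def densityDiff (ν μ : Measure α) : α → ℝ :=
  fun x => (ν.rnDeriv (ν + μ) x).toReal - (μ.rnDeriv (ν + μ) x).toReal

variable {ν μ : Measure α}

lemma measurable_densityDiff : Measurable (densityDiff ν μ) := by
  unfold densityDiff; fun_prop

lemma integral_sub_integral_eq_integral_densityDiff_mul [SigmaFinite ν] [SigmaFinite μ]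
    {f : α → ℝ} (hfν : Integrable f ν) (hfμ : Integrable f μ) :
    ∫ x, f x ∂ν - ∫ x, f x ∂μ = ∫ x, densityDiff ν μ x * f x ∂(ν + μ) := by
  have hν : ν ≪ ν + μ := Measure.AbsolutelyContinuous.rfl.add_right μ
  have hμ : μ ≪ ν + μ := Measure.AbsolutelyContinuous.rfl.add_right' ν
  rw [← integral_toReal_rnDeriv_mul hν, ← integral_toReal_rnDeriv_mul hμ, ← integral_sub
    ((integrable_toReal_rnDeriv_mul_iff hν).mpr hfν)
    ((integrable_toReal_rnDeriv_mul_iff hμ).mpr hfμ)]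
  simp only [densityDiff, sub_mul]

lemma abs_densityDiff_le_one [SigmaFinite ν] [SigmaFinite μ] :
    ∀ᵐ x ∂(ν + μ), |densityDiff ν μ x| ≤ 1 := by
  filter_upwards [Measure.rnDeriv_add' ν μ (ν + μ), Measure.rnDeriv_self (ν + μ),
    Measure.rnDeriv_lt_top ν (ν + μ), Measure.rnDeriv_lt_top μ (ν + μ)] with x hadd hself hν hμ
  have hsum : (ν.rnDeriv (ν + μ) x).toReal + (μ.rnDeriv (ν + μ) x).toReal = 1 := by
    rw [← ENNReal.toReal_add hν.ne hμ.ne, ← Pi.add_apply, ← hadd, hself, ENNReal.toReal_one]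
  rw [densityDiff, abs_sub_le_iff]
  constructor <;> linarith [ENNReal.toReal_nonneg (a := ν.rnDeriv (ν + μ) x),
    ENNReal.toReal_nonneg (a := μ.rnDeriv (ν + μ) x)]

lemma memLp_densityDiff [IsFiniteMeasure ν] [IsFiniteMeasure μ] :
    MemLp (densityDiff ν μ) 2 (ν + μ) :=
  MemLp.of_bound measurable_densityDiff.aestronglyMeasurable 1
    (by simpa only [Real.norm_eq_abs] using abs_densityDiff_le_one)

lemma integral_abs_densityDiff_le [IsFiniteMeasure ν] [IsFiniteMeasure μ] :
    ∫ x, |densityDiff ν μ x| ∂(ν + μ) ≤ 2 * tvDist ν μ := by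
  have hν : ν ≪ ν + μ := Measure.AbsolutelyContinuous.rfl.add_right μ
  have hμ : μ ≪ ν + μ := Measure.AbsolutelyContinuous.rfl.add_right' ν
  have hνint := Measure.integrable_toReal_rnDeriv (μ := ν) (ν := ν + μ)
  have hμint := Measure.integrable_toReal_rnDeriv (μ := μ) (ν := ν + μ)
  set A := {x | 0 ≤ densityDiff ν μ x}
  have hA : MeasurableSet A := measurableSet_le measurable_const measurable_densityDiff
  have hpos : ∫ x in A, |densityDiff ν μ x| ∂(ν + μ) = ν.real A - μ.real A := by
    rw [setIntegral_congr_fun hA fun x hx => abs_of_nonneg hx]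
    simp only [densityDiff]
    rw [integral_sub hνint.restrict hμint.restrict, Measure.setIntegral_toReal_rnDeriv hν,
      Measure.setIntegral_toReal_rnDeriv hμ]
  have hneg : ∫ x in Aᶜ, |densityDiff ν μ x| ∂(ν + μ) = μ.real Aᶜ - ν.real Aᶜ := by
    rw [setIntegral_congr_fun hA.compl
      fun x (hx : ¬0 ≤ densityDiff ν μ x) => abs_of_neg (not_le.mp hx)]
    simp only [densityDiff, neg_sub]
    rw [integral_sub hμint.restrict hνint.restrict, Measure.setIntegral_toReal_rnDeriv hμ,
      Measure.setIntegral_toReal_rnDeriv hν]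
  rw [← integral_add_compl hA (memLp_densityDiff.integrable one_le_two).abs, hpos, hneg]
  linarith [le_abs_self (ν.real A - μ.real A), neg_abs_le (ν.real Aᶜ - μ.real Aᶜ),
    abs_measureReal_sub_le_tvDist ν μ hA, abs_measureReal_sub_le_tvDist ν μ hA.compl]

lemma integral_densityDiff_sq_le [IsFiniteMeasure ν] [IsFiniteMeasure μ] :
    ∫ x, densityDiff ν μ x ^ 2 ∂(ν + μ) ≤ 2 * tvDist ν μ := by
  refine le_trans (integral_mono_ae memLp_densityDiff.integrable_sq
    (memLp_densityDiff.integrable one_le_two).abs ?_) integral_abs_densityDiff_le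
  filter_upwards [abs_densityDiff_le_one] with x hx
  rw [← sq_abs]
  nlinarith [abs_nonneg (densityDiff ν μ x)]

end DensityDiff

section TVBound

variable {α : Type*} [MeasurableSpace α] {ν μ : Measure α} [IsFiniteMeasure ν] [IsFiniteMeasure μ]

lemma abs_integral_sub_integral_le {f : α → ℝ} (hfν : MemLp f 2 ν) (hfμ : MemLp f 2 μ) :
    |∫ x, f x ∂ν - ∫ x, f x ∂μ| ≤
      2 * √(∫ x, f x ^ 2 ∂ν + ∫ x, f x ^ 2 ∂μ) * √(tvDist ν μ) := by
  have hf : MemLp f 2 (ν + μ) :=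
    (memLp_two_iff_integrable_sq (hfν.1.add_measure hfμ.1)).mpr
      (hfν.integrable_sq.add_measure hfμ.integrable_sq)
  have hsqrt_two : √2 ≤ 2 := by
    rw [Real.sqrt_le_left zero_le_two]; norm_num
  rw [integral_sub_integral_eq_integral_densityDiff_mul (hfν.integrable one_le_two)
    (hfμ.integrable one_le_two)]
  calc _ ≤ √(∫ x, densityDiff ν μ x ^ 2 ∂(ν + μ)) * √(∫ x, f x ^ 2 ∂(ν + μ)) :=
        abs_integral_mul_le_sqrt_mul_sqrt memLp_densityDiff hf
    _ ≤ √2 * √(tvDist ν μ) * √(∫ x, f x ^ 2 ∂ν + ∫ x, f x ^ 2 ∂μ) := by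
        rw [← Real.sqrt_mul zero_le_two, integral_add_measure hfν.integrable_sq hfμ.integrable_sq]
        gcongr
        exact integral_densityDiff_sq_le
    _ ≤ 2 * √(∫ x, f x ^ 2 ∂ν + ∫ x, f x ^ 2 ∂μ) * √(tvDist ν μ) := by
        rw [mul_right_comm]
        gcongr

lemma abs_integral_sub_integral_le_of_abs_le {f Q : α → ℝ} (hQν : MemLp Q 2 ν)
    (hQμ : MemLp Q 2 μ) (hfν : AEStronglyMeasurable f ν) (hfμ : AEStronglyMeasurable f μ)
    (hfQ : ∀ x, |f x| ≤ |Q x|) :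
    |∫ x, f x ∂ν - ∫ x, f x ∂μ| ≤
      2 * √(∫ x, Q x ^ 2 ∂ν + ∫ x, Q x ^ 2 ∂μ) * √(tvDist ν μ) := by
  have hnorm : ∀ {ρ : Measure α}, ∀ᵐ x ∂ρ, ‖f x‖ ≤ ‖Q x‖ :=
    ae_of_all _ fun x => by simpa only [Real.norm_eq_abs] using hfQ x
  have hf2ν := hQν.of_le hfν hnorm
  have hf2μ := hQμ.of_le hfμ hnorm
  have hsq : ∀ x, f x ^ 2 ≤ Q x ^ 2 := fun x => sq_le_sq.mpr (hfQ x)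
  refine (abs_integral_sub_integral_le hf2ν hf2μ).trans ?_
  gcongr 2 * √(?_ + ?_) * _
  · exact integral_mono hf2ν.integrable_sq hQν.integrable_sq hsq
  · exact integral_mono hf2μ.integrable_sq hQμ.integrable_sq hsq

end TVBound

lemma abs_max_sub_le_abs {q t : ℝ} (ht : 0 ≤ t) : |max (q - t) 0| ≤ |q| := by
  rw [abs_of_nonneg (le_max_right _ _)]
  exact max_le (by linarith [le_abs_self q]) (abs_nonneg q)

lemma abs_max_le_abs {q t : ℝ} (ht : t ≤ 0) : |max q t| ≤ |q| := by
  rcases le_total t q with h | h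
  · rw [max_eq_left h]
  · rw [max_eq_right h, abs_of_nonpos ht, abs_of_nonpos (h.trans ht)]
    linarith

lemma integral_max_sub_zero {α : Type*} [MeasurableSpace α] {ρ : Measure α}
    [IsProbabilityMeasure ρ] {Q : α → ℝ} (hQ : Integrable Q ρ) (t : ℝ) :
    ∫ x, max (Q x - t) 0 ∂ρ = ∫ x, max (Q x) t ∂ρ - t := by
  have hshift : ∀ x, max (Q x - t) 0 = max (Q x) t - t := fun x => by
    rw [← max_sub_sub_right, sub_self]
  rw [integral_congr_ae (ae_of_all _ hshift), integral_sub (f := fun x => max (Q x) t)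
    (hQ.sup (integrable_const t)) (integrable_const t), integral_const,
    probReal_univ, one_smul]

/-- Uniform-in-`t` total variation bound for expectations of `(Q − t)^+`: for probability
measures `ν, μ` and `Q` with finite second moments under both,
`|E_ν[(Q−t)^+] − E_μ[(Q−t)^+]| ≤ 2 (E_ν[Q²] + E_μ[Q²])^{1/2} tv(ν, μ)^{1/2}` for all `t`. -/
theorem ramp_expectation_tv_bound {α : Type*} [MeasurableSpace α]
    (ν μ : Measure α) [IsProbabilityMeasure ν] [IsProbabilityMeasure μ]
    (Q : α → ℝ) (hQν : MemLp Q 2 ν) (hQμ : MemLp Q 2 μ) :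
    ∀ t : ℝ,
      |(∫ x, max (Q x - t) 0 ∂ν) - ∫ x, max (Q x - t) 0 ∂μ| ≤
        2 * Real.sqrt ((∫ x, Q x ^ 2 ∂ν) + ∫ x, Q x ^ 2 ∂μ) * Real.sqrt (tvDist ν μ) := by
  intro t
  have hQν_meas := hQν.1
  have hQμ_meas := hQμ.1
  rcases le_or_gt 0 t with ht | ht
  · exact abs_integral_sub_integral_le_of_abs_le hQν hQμ (by fun_prop) (by fun_prop)
      fun x => abs_max_sub_le_abs ht
  · have hbound := abs_integral_sub_integral_le_of_abs_le hQν hQμ (f := fun x => max (Q x) t)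
      (by fun_prop) (by fun_prop) fun x => abs_max_le_abs ht.le
    rwa [integral_max_sub_zero (hQν.integrable one_le_two),
      integral_max_sub_zero (hQμ.integrable one_le_two), sub_sub_sub_cancel_right]
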